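/- Let p, q ∈ ℂ[z₁,…,zₙ] be coprime nonzero polynomials such that the rational function r = p/q maps S₁ⁿ into S₁ (wherever defined). Then there exist β ∈ ℂ with |β| = 1 and integers t₁,…,tₙ such that q(z) = β · z₁^{t₁}···zₙ^{tₙ} · p̄(z₁⁻¹,…,zₙ⁻¹) as Laurent polynomials. -/

import Mathlib

open MvPolynomial Complex Finset

variable {n : ℕ}


lemma circle_infinite : {z : ℂ | ‖z‖ = 1}.Infinite := by
  have : Set.Infinite (Set.Ioo (0:ℝ) 1) := Set.Ioo_infinite (by norm_num)
  have hinj : Function.Injective (fun θ : (Set.Ioo (0:ℝ) 1) => Complex.exp (θ * Complex.I)) := by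
    rintro ⟨a, ha0, ha1⟩ ⟨b, hb0, hb1⟩ hab
    simp only at hab
    rw [Complex.exp_eq_exp_iff_exists_int] at hab
    obtain ⟨k, hk⟩ := hab
    have : (a : ℂ) = b + k * (2 * Real.pi) := by
      have := hk
      field_simp at this ⊢
      have hI : (Complex.I : ℂ) ≠ 0 := Complex.I_ne_zero
      have : (a : ℂ) * Complex.I = (b + k * (2*Real.pi)) * Complex.I := by rw [hk]; ring
      exact (mul_right_cancel₀ hI this).trans (by ring)
    have hre : a = b + k * (2 * Real.pi) := by
      exact_mod_cast congrArg Complex.re this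
    have hpi : (2:ℝ) < 2 * Real.pi := by nlinarith [Real.pi_gt_three]
    have hk0 : k = 0 := by
      rcases lt_trichotomy k 0 with hk' | hk' | hk'
      · exfalso
        have : (k : ℝ) ≤ -1 := by exact_mod_cast (by omega : k ≤ -1)
        nlinarith
      · exact hk'
      · exfalso
        have : (1:ℝ) ≤ k := by exact_mod_cast hk'
        nlinarith
    subst hk0
    ext1
    simpa using hre
  have : Infinite (Set.Ioo (0:ℝ) 1) := Set.infinite_coe_iff.mpr this
  exact Set.infinite_of_injective_forall_mem hinj
    (fun θ => by simpa using Complex.norm_exp_ofReal_mul_I θ)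

lemma vanish_torus_zero : ∀ {n : ℕ} (f : MvPolynomial (Fin n) ℂ),
    (∀ z : Fin n → ℂ, (∀ i, ‖z i‖ = 1) → MvPolynomial.eval z f = 0) → f = 0 := by
  intro n
  induction n with
  | zero =>
    intro f hf
    have h0 := hf (fun i => i.elim0) (fun i => i.elim0)
    have : (isEmptyRingEquiv ℂ (Fin 0)) f = 0 := by
      rw [isEmptyRingEquiv]
      simp [isEmptyAlgEquiv, aeval_def]
      rw [← h0, eval_eq, Finset.sum_eq_single (0 : Fin 0 →₀ ℕ)] <;> simp [Subsingleton.elim _ (0 : Fin 0 →₀ ℕ)] <;> rfl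
    exact (isEmptyRingEquiv ℂ (Fin 0)).injective (by simpa using this)
  | succ n ih =>
    intro f hf
    have key : finSuccEquiv ℂ n f = 0 := by
      apply Polynomial.ext
      intro k
      rw [Polynomial.coeff_zero]
      apply ih
      intro z hz
      have hmap : ∀ y : ℂ, ‖y‖ = 1 →
          Polynomial.eval y (Polynomial.map (eval z) (finSuccEquiv ℂ n f)) = 0 := by
        intro y hy
        rw [← eval_eq_eval_mv_eval']
        apply hf
        intro i
        refine Fin.cases ?_ ?_ i
        · simpa using hy
        · intro j; simpa using hz j
      have : Polynomial.map (eval z) (finSuccEquiv ℂ n f) = 0 := by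
        apply Polynomial.eq_zero_of_infinite_isRoot
        apply Set.Infinite.mono _ circle_infinite
        intro y hy
        exact hmap y hy
      have := congrArg (fun g => Polynomial.coeff g k) this
      simpa [Polynomial.coeff_map] using this
    have : f = (finSuccEquiv ℂ n).symm 0 := by
      rw [← key]; simp
    simpa using this

noncomputable def reflPoly (N : Fin n →₀ ℕ) (f : MvPolynomial (Fin n) ℂ) :
    MvPolynomial (Fin n) ℂ :=
  ∑ a ∈ f.support, monomial (N - a) ((starRingEnd ℂ) (f.coeff a))

lemma eval_reflPoly (N : Fin n →₀ ℕ) (f : MvPolynomial (Fin n) ℂ)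
    (hsupp : ∀ a ∈ f.support, ∀ i, a i ≤ N i) (z : Fin n → ℂ) (hz : ∀ i, z i ≠ 0) :
    MvPolynomial.eval z (reflPoly N f) =
      (∏ i, z i ^ N i) * MvPolynomial.eval (fun i => (z i)⁻¹) (MvPolynomial.map (starRingEnd ℂ) f) := by
  rw [reflPoly, map_sum, eval_map, eval₂_eq' (starRingEnd ℂ) (fun i => (z i)⁻¹) f]
  rw [Finset.mul_sum]
  apply Finset.sum_congr rfl
  intro a ha
  rw [eval_monomial]
  rw [Finsupp.prod_pow]
  have : ∀ i : Fin n, z i ^ (N - a) i = z i ^ N i * ((z i)⁻¹) ^ a i := by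
    intro i
    rw [Finsupp.tsub_apply, inv_pow, pow_sub₀ _ (hz i) (hsupp a ha i)]
  simp_rw [this]
  rw [Finset.prod_mul_distrib]
  ring

lemma torus_conj (f : MvPolynomial (Fin n) ℂ) (z : Fin n → ℂ)
    (hz : ∀ i, ‖z i‖ = 1) :
    MvPolynomial.eval (fun i => (z i)⁻¹) (MvPolynomial.map (starRingEnd ℂ) f) =
      (starRingEnd ℂ) (MvPolynomial.eval z f) := by
  have hinv : ∀ i, (z i)⁻¹ = (starRingEnd ℂ) (z i) := by
    intro i
    have hz0 : z i ≠ 0 := fun h0 => by have := hz i; rw [h0] at this; simp at this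
    have h1 : z i * (starRingEnd ℂ) (z i) = 1 := by
      rw [Complex.mul_conj]
      norm_cast
      rw [Complex.normSq_eq_norm_sq, hz i, one_pow]
    exact inv_eq_of_mul_eq_one_right h1
  rw [eval_map]
  have : (fun i => (z i)⁻¹) = fun i => (starRingEnd ℂ) (z i) := funext hinv
  rw [this]
  have heq : MvPolynomial.eval z f = eval₂ (RingHom.id ℂ) z f := rfl
  rw [heq, eval₂_comp_left (starRingEnd ℂ) (RingHom.id ℂ) z f]
  rfl

lemma torus_prod_mul_conj (N : Fin n →₀ ℕ) (z : Fin n → ℂ)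
    (hz : ∀ i, ‖z i‖ = 1) :
    (∏ i, z i ^ N i) * (starRingEnd ℂ) (∏ i, z i ^ N i) = 1 := by
  rw [Complex.mul_conj]
  norm_cast
  rw [Complex.normSq_eq_norm_sq, norm_prod]
  simp_rw [norm_pow]
  simp only [hz, one_pow]
  simp

lemma primeX (i : Fin n) : Prime (MvPolynomial.X i : MvPolynomial (Fin n) ℂ) := by
  cases n with
  | zero => exact i.elim0
  | succ m =>
    let e := (renameEquiv ℂ (Equiv.swap i 0)).trans (finSuccEquiv ℂ m)
    have he : e (MvPolynomial.X i) = Polynomial.X := by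
      simp [e, renameEquiv_apply, rename_X, Equiv.swap_apply_left, finSuccEquiv_X_zero]
    rw [← MulEquiv.prime_iff e.toMulEquiv]
    rw [show (e.toMulEquiv (MvPolynomial.X i)) = Polynomial.X from he]
    exact Polynomial.prime_X

lemma isUnit_eq_C : ∀ {n : ℕ} (c : MvPolynomial (Fin n) ℂ), IsUnit c →
    ∃ γ : ℂ, γ ≠ 0 ∧ c = MvPolynomial.C γ := by
  intro n
  induction n with
  | zero =>
    intro c hc
    refine ⟨isEmptyRingEquiv ℂ (Fin 0) c, ?_, ?_⟩
    · intro h0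
      exact hc.ne_zero ((isEmptyRingEquiv ℂ (Fin 0)).injective (by simpa using h0))
    · apply (isEmptyRingEquiv ℂ (Fin 0)).injective
      simp [isEmptyRingEquiv, isEmptyAlgEquiv, aeval_def]
      exact (coeff_zero_C _).symm
  | succ m ih =>
    intro c hc
    have hunit : IsUnit (finSuccEquiv ℂ m c) := hc.map _
    obtain ⟨r, hr, hrc⟩ := Polynomial.isUnit_iff.mp hunit
    obtain ⟨γ, hγ, rfl⟩ := ih r hr
    refine ⟨γ, hγ, ?_⟩
    apply (finSuccEquiv ℂ m).injective
    rw [← hrc]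
    simp [finSuccEquiv_apply]

lemma dvd_prod_X_pow (s : Finset (Fin n)) (k : Fin n → ℕ) :
    ∀ c : MvPolynomial (Fin n) ℂ, c ∣ ∏ i ∈ s, MvPolynomial.X i ^ k i →
      ∃ (γ : ℂ) (m : Fin n → ℕ), γ ≠ 0 ∧ c = MvPolynomial.C γ * ∏ i ∈ s, MvPolynomial.X i ^ m i := by
  induction s using Finset.induction_on with
  | empty =>
    intro c hc
    rw [Finset.prod_empty] at hc
    obtain ⟨γ, hγ, rfl⟩ := isUnit_eq_C c (isUnit_of_dvd_one hc)
    exact ⟨γ, fun _ => 0, hγ, by simp⟩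
  | @insert a s ha ih =>
    intro c hc
    rw [Finset.prod_insert ha] at hc
    obtain ⟨d₁, d₂, hd₁, hd₂, rfl⟩ := exists_dvd_and_dvd_of_dvd_mul hc
    obtain ⟨j, hj, hassoc⟩ := (dvd_prime_pow (primeX a) (k a)).mp hd₁
    obtain ⟨u, hu⟩ := hassoc.symm
    obtain ⟨γ₁, hγ₁, huC⟩ := isUnit_eq_C u.val u.isUnit
    obtain ⟨γ₂, m, hγ₂, rfl⟩ := ih d₂ hd₂
    refine ⟨γ₁ * γ₂, Function.update m a j, by simp [hγ₁, hγ₂], ?_⟩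
    rw [Finset.prod_insert ha]
    have hd1 : d₁ = MvPolynomial.C γ₁ * MvPolynomial.X a ^ j := by
      rw [← hu, huC]; ring
    have hprod : ∏ x ∈ s, MvPolynomial.X x ^ Function.update m a j x
        = ∏ x ∈ s, (MvPolynomial.X x : MvPolynomial (Fin n) ℂ) ^ m x :=
      Finset.prod_congr rfl (fun i hi => by
        rw [Function.update_of_ne (fun h : i = a => ha (h ▸ hi))])
    rw [hd1, Function.update_self, hprod, map_mul]
    ring

/-- Coprimality is expressed as: every common divisor is a unit. The Laurent
polynomial identity is expressed as an equality of functions on the torus `(ℂ \ {0})ⁿ`. -/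
theorem stmt_9 (n : ℕ) (p q : MvPolynomial (Fin n) ℂ) (hp : p ≠ 0) (hq : q ≠ 0)
    (hcop : ∀ d : MvPolynomial (Fin n) ℂ, d ∣ p → d ∣ q → IsUnit d)
    (h : ∀ z : Fin n → ℂ, (∀ i, ‖z i‖ = 1) → MvPolynomial.eval z q ≠ 0 →
      ‖MvPolynomial.eval z p / MvPolynomial.eval z q‖ = 1) :
    ∃ (β : ℂ) (t : Fin n → ℤ), ‖β‖ = 1 ∧
      ∀ z : Fin n → ℂ, (∀ i, z i ≠ 0) →
        MvPolynomial.eval z q =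
          β * (∏ i, (z i) ^ (t i)) *
            MvPolynomial.eval (fun i => (z i)⁻¹) (MvPolynomial.map (starRingEnd ℂ) p) := by
  classical
  -- basic facts about torus points
  have htz : ∀ (z : Fin n → ℂ), (∀ i, ‖z i‖ = 1) → ∀ i, z i ≠ 0 := by
    intro z hz i h0
    have := hz i; rw [h0] at this; simp at this
  have habs : ∀ (z : Fin n → ℂ), (∀ i, ‖z i‖ = 1) →
      MvPolynomial.eval z q ≠ 0 →
      ‖MvPolynomial.eval z p‖ = ‖MvPolynomial.eval z q‖ := by
    intro z hz hq0
    have := h z hz hq0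
    rw [norm_div] at this
    have habsq : ‖MvPolynomial.eval z q‖ ≠ 0 := by simpa using hq0
    field_simp at this
    exact this
  set N : Fin n →₀ ℕ :=
    Finsupp.equivFunOnFinite.symm (fun i => max (degreeOf i p) (degreeOf i q)) with hN
  have hNi : ∀ i, N i = max (degreeOf i p) (degreeOf i q) := fun i => rfl
  have hNp : ∀ a ∈ p.support, ∀ i, a i ≤ N i := fun a ha i =>
    (monomial_le_degreeOf i ha).trans (by rw [hNi]; exact le_max_left _ _)
  have hNq : ∀ a ∈ q.support, ∀ i, a i ≤ N i := fun a ha i =>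
    (monomial_le_degreeOf i ha).trans (by rw [hNi]; exact le_max_right _ _)
  set P := reflPoly N p with hPdef
  set Q := reflPoly N q with hQdef
  -- Step A : p * P = q * Q
  have hA : p * P = q * Q := by
    have hvan : (p * P - q * Q) * q = 0 := by
      apply vanish_torus_zero
      intro z hz
      have hz0 := htz z hz
      rw [map_mul, map_sub]
      by_cases hq0 : MvPolynomial.eval z q = 0
      · rw [hq0]; ring
      · have hab := habs z hz hq0
        have hpp : MvPolynomial.eval z p * (starRingEnd ℂ) (MvPolynomial.eval z p) =
            MvPolynomial.eval z q * (starRingEnd ℂ) (MvPolynomial.eval z q) := by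
          rw [Complex.mul_conj, Complex.mul_conj]
          norm_cast
          rw [Complex.normSq_eq_norm_sq, Complex.normSq_eq_norm_sq, hab]
        rw [map_mul, map_mul, hPdef, hQdef,
          eval_reflPoly N p hNp z hz0, eval_reflPoly N q hNq z hz0,
          torus_conj p z hz, torus_conj q z hz]
        linear_combination ((∏ i, z i ^ N i) * MvPolynomial.eval z q) * hpp
    have h1 : p * P - q * Q = 0 := by
      rcases mul_eq_zero.mp hvan with h1 | h1
      · exact h1
      · exact absurd h1 hq
    exact sub_eq_zero.mp h1
  -- Step B : q ∣ P
  have hrp : IsRelPrime q p := fun d hdq hdp => hcop d hdp hdq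
  have hqP : q ∣ P := hrp.dvd_of_dvd_mul_left ⟨Q, hA⟩
  obtain ⟨c, hPqc⟩ := hqP
  -- Step C : Q = p * c
  have hQpc : Q = p * c := by
    apply mul_left_cancel₀ hq
    rw [← hA, hPqc]; ring
  -- Step E : c * reflPoly M c = monomial M 1
  set M : Fin n →₀ ℕ := Finsupp.equivFunOnFinite.symm (fun i => degreeOf i c) with hM
  have hMc : ∀ a ∈ c.support, ∀ i, a i ≤ M i := fun a ha i => monomial_le_degreeOf i ha
  have hpq0 : p * q ≠ 0 := mul_ne_zero hp hq
  have hcc : c * reflPoly M c = monomial M 1 := by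
    have hvan : (c * reflPoly M c - monomial M 1) * (p * q) = 0 := by
      apply vanish_torus_zero
      intro z hz
      have hz0 := htz z hz
      rw [map_mul, map_sub, map_mul, map_mul]
      by_cases hpq : MvPolynomial.eval z p * MvPolynomial.eval z q = 0
      · rw [hpq]; ring
      · have hp0 : MvPolynomial.eval z p ≠ 0 := fun h0 => hpq (by rw [h0]; ring)
        have hq0 : MvPolynomial.eval z q ≠ 0 := fun h0 => hpq (by rw [h0]; ring)
        have e1 : MvPolynomial.eval z q * MvPolynomial.eval z c =
            (∏ i, z i ^ N i) * (starRingEnd ℂ) (MvPolynomial.eval z p) := by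
          rw [← map_mul, ← hPqc, hPdef, eval_reflPoly N p hNp z hz0, torus_conj p z hz]
        have e2 : MvPolynomial.eval z p * MvPolynomial.eval z c =
            (∏ i, z i ^ N i) * (starRingEnd ℂ) (MvPolynomial.eval z q) := by
          rw [← map_mul, ← hQpc, hQdef, eval_reflPoly N q hNq z hz0, torus_conj q z hz]
        have e2c : (starRingEnd ℂ) (MvPolynomial.eval z p) * (starRingEnd ℂ) (MvPolynomial.eval z c) =
            (starRingEnd ℂ) (∏ i, z i ^ N i) * MvPolynomial.eval z q := by
          have := congrArg (starRingEnd ℂ) e2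
          simpa [map_mul] using this
        have hNN := torus_prod_mul_conj N z hz
        -- multiply e1 and e2c
        have key : (MvPolynomial.eval z q * (starRingEnd ℂ) (MvPolynomial.eval z p)) *
            (MvPolynomial.eval z c * (starRingEnd ℂ) (MvPolynomial.eval z c)) =
            (MvPolynomial.eval z q * (starRingEnd ℂ) (MvPolynomial.eval z p)) * 1 := by
          calc (MvPolynomial.eval z q * (starRingEnd ℂ) (MvPolynomial.eval z p)) *
              (MvPolynomial.eval z c * (starRingEnd ℂ) (MvPolynomial.eval z c))
              = (MvPolynomial.eval z q * MvPolynomial.eval z c) *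
                ((starRingEnd ℂ) (MvPolynomial.eval z p) * (starRingEnd ℂ) (MvPolynomial.eval z c)) := by ring
            _ = ((∏ i, z i ^ N i) * (starRingEnd ℂ) (MvPolynomial.eval z p)) *
                ((starRingEnd ℂ) (∏ i, z i ^ N i) * MvPolynomial.eval z q) := by rw [e1, e2c]
            _ = ((∏ i, z i ^ N i) * (starRingEnd ℂ) (∏ i, z i ^ N i)) *
                ((starRingEnd ℂ) (MvPolynomial.eval z p) * MvPolynomial.eval z q) := by ring
            _ = (MvPolynomial.eval z q * (starRingEnd ℂ) (MvPolynomial.eval z p)) * 1 := by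
                rw [hNN]; ring
        have hqp0 : MvPolynomial.eval z q * (starRingEnd ℂ) (MvPolynomial.eval z p) ≠ 0 := by
          apply mul_ne_zero hq0
          simpa using hp0
        have hccz : MvPolynomial.eval z c * (starRingEnd ℂ) (MvPolynomial.eval z c) = 1 :=
          mul_left_cancel₀ hqp0 key
        have emo : MvPolynomial.eval z (monomial M (1:ℂ)) = ∏ i, z i ^ M i := by
          rw [eval_monomial, one_mul, Finsupp.prod_pow]
        have erc : MvPolynomial.eval z (reflPoly M c) =
            (∏ i, z i ^ M i) * (starRingEnd ℂ) (MvPolynomial.eval z c) := by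
          rw [eval_reflPoly M c hMc z hz0, torus_conj c z hz]
        rw [erc, emo]
        linear_combination ((∏ i, z i ^ M i) * (MvPolynomial.eval z p * MvPolynomial.eval z q)) * hccz
    have h1 : c * reflPoly M c - monomial M 1 = 0 := by
      rcases mul_eq_zero.mp hvan with h1 | h1
      · exact h1
      · exact absurd h1 hpq0
    exact sub_eq_zero.mp h1
  -- Step F : structure of c
  have hmono : monomial M (1:ℂ) = ∏ i, MvPolynomial.X i ^ M i := by
    rw [← prod_X_pow_eq_monomial]
    apply Finset.prod_subset (Finset.subset_univ M.support)
    intro i _ hi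
    rw [Finsupp.notMem_support_iff] at hi
    rw [hi, pow_zero]
  obtain ⟨γ, m, hγ, hcform⟩ := dvd_prod_X_pow Finset.univ (fun i => M i) c
    (by rw [← hmono]; exact ⟨reflPoly M c, hcc.symm⟩)
  -- evaluation of c
  have hevalc : ∀ z : Fin n → ℂ, MvPolynomial.eval z c = γ * ∏ i, z i ^ m i := by
    intro z
    rw [hcform]
    simp [eval_prod]
  -- Step G : |γ| = 1
  have hex : ∃ z : Fin n → ℂ, (∀ i, ‖z i‖ = 1) ∧
      MvPolynomial.eval z p * MvPolynomial.eval z q ≠ 0 := by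
    by_contra hcon
    push_neg at hcon
    have : p * q = 0 := by
      apply vanish_torus_zero
      intro z hz
      rw [map_mul]
      exact hcon z hz
    exact hpq0 this
  obtain ⟨z₀, hz₀t, hz₀pq⟩ := hex
  have hz₀0 := htz z₀ hz₀t
  have hq₀ : MvPolynomial.eval z₀ q ≠ 0 := fun h0 => hz₀pq (by rw [h0]; ring)
  have hp₀ : MvPolynomial.eval z₀ p ≠ 0 := fun h0 => hz₀pq (by rw [h0]; ring)
  have e1₀ : MvPolynomial.eval z₀ q * MvPolynomial.eval z₀ c =
      (∏ i, z₀ i ^ N i) * (starRingEnd ℂ) (MvPolynomial.eval z₀ p) := by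
    rw [← map_mul, ← hPqc, hPdef, eval_reflPoly N p hNp z₀ hz₀0, torus_conj p z₀ hz₀t]
  have habsN : ‖∏ i, z₀ i ^ N i‖ = 1 := by
    rw [norm_prod]
    simp_rw [norm_pow]
    simp only [hz₀t, one_pow]
    simp
  have habsc : ‖MvPolynomial.eval z₀ c‖ = ‖γ‖ := by
    rw [hevalc z₀, norm_mul, norm_prod]
    simp_rw [norm_pow]
    simp only [hz₀t, one_pow]
    simp
  have hγabs : ‖γ‖ = 1 := by
    have := congrArg (‖·‖) e1₀
    rw [norm_mul, norm_mul, habsN, habsc, one_mul] at this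
    rw [Complex.norm_conj, habs z₀ hz₀t hq₀] at this
    have hqa : ‖MvPolynomial.eval z₀ q‖ ≠ 0 := by simpa using hq₀
    exact mul_left_cancel₀ hqa (this.trans (mul_one _).symm)
  -- Final assembly
  refine ⟨γ⁻¹, fun i => (N i : ℤ) - (m i : ℤ), by simp [norm_inv, hγabs], ?_⟩
  intro z hz0
  set E := MvPolynomial.eval (fun i => (z i)⁻¹) (MvPolynomial.map (starRingEnd ℂ) p) with hE
  have hevP : MvPolynomial.eval z q * (γ * ∏ i, z i ^ m i) =
      (∏ i, z i ^ N i) * E := by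
    rw [hE, ← hevalc z, ← map_mul, ← hPqc, hPdef, eval_reflPoly N p hNp z hz0]
  have hzp : ∀ i, z i ^ ((N i : ℤ) - (m i : ℤ)) = z i ^ N i * (z i ^ m i)⁻¹ := by
    intro i
    rw [zpow_sub₀ (hz0 i), zpow_natCast, zpow_natCast, div_eq_mul_inv]
  simp_rw [hzp]
  rw [Finset.prod_mul_distrib, Finset.prod_inv_distrib]
  have hm0 : (∏ i, z i ^ m i) ≠ 0 := Finset.prod_ne_zero_iff.mpr (fun i _ => pow_ne_zero _ (hz0 i))
  field_simp
  linear_combination hevP
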